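/- For δ > 0 and f(ρ) = 2ρ - ρ², the minimax value max over c > 0 of min(f(c·e^δ), f(c·e^{-δ})) equals sech²(δ), and is attained uniquely at c = sech(δ). -/

import Mathlib

/-!
The function `f ρ = 2ρ - ρ²` is symmetric about `ρ = 1`, increasing to its left and decreasing
to its right. For `a, b > 0` and the scale `s` with `s a + s b = 2`, the points `s a` and `s b`
are mirror images about `1`, so `f (s a) = f (s b)`. Moving `c` below `s` pushes the smaller of
`c a, c b` further left of `1`, and moving it above `s` pushes the larger further right, so in
either case the minimum drops strictly. With `a = e^δ`, `b = e^{-δ}` the scale is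
`s = 1 / cosh δ`, and `f (e^δ / cosh δ) = 4 e^δ e^{-δ} / (e^δ + e^{-δ})² = 1 / cosh² δ`.
-/

open Set

theorem strictMonoOn_two_mul_sub_sq : StrictMonoOn (fun ρ : ℝ => 2 * ρ - ρ ^ 2) (Iic 1) := by
  intro x hx y hy hxy
  simp only [mem_Iic] at hx hy
  nlinarith

theorem strictAntiOn_two_mul_sub_sq : StrictAntiOn (fun ρ : ℝ => 2 * ρ - ρ ^ 2) (Ici 1) := by
  intro x hx y hy hxy
  simp only [mem_Ici] at hx hy
  nlinarith

theorem two_mul_sub_sq_two_sub (t : ℝ) : 2 * (2 - t) - (2 - t) ^ 2 = 2 * t - t ^ 2 := by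
  ring

theorem two_mul_sub_sq_exp_div_cosh (δ : ℝ) :
    2 * (1 / Real.cosh δ * Real.exp δ) - (1 / Real.cosh δ * Real.exp δ) ^ 2
      = 1 / Real.cosh δ ^ 2 := by
  have hsum : 0 < Real.exp δ + (Real.exp δ)⁻¹ := by positivity
  rw [Real.cosh_eq, Real.exp_neg]
  field_simp
  ring

section SymmetricUnimodal

variable {f : ℝ → ℝ} {a b s : ℝ}

theorem comp_mul_eq_comp_mul_of_symm (hsymm : ∀ t, f (2 - t) = f t) (hs : s * (a + b) = 2) :
    f (s * b) = f (s * a) := by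
  rw [← hsymm (s * a)]
  congr 1
  linarith

theorem min_comp_mul_lt_of_ne (hmono : StrictMonoOn f (Iic 1)) (hanti : StrictAntiOn f (Ici 1))
    (hsymm : ∀ t, f (2 - t) = f t) (ha : 0 < a) (hb : 0 < b) (hs : s * (a + b) = 2)
    {c : ℝ} (hc : c ≠ s) :
    min (f (c * a)) (f (c * b)) < f (s * a) := by
  wlog hba : b ≤ a generalizing a b
  · rw [min_comm, ← comp_mul_eq_comp_mul_of_symm hsymm hs]
    exact this hb ha (by linarith) (by linarith)
  have hsa : 1 ≤ s * a := by nlinarith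
  have hsb : s * b ≤ 1 := by nlinarith
  rcases hc.lt_or_gt with hlt | hgt
  · have hcb : c * b < s * b := mul_lt_mul_of_pos_right hlt hb
    calc min (f (c * a)) (f (c * b)) ≤ f (c * b) := min_le_right _ _
      _ < f (s * b) := hmono (hcb.le.trans hsb) hsb hcb
      _ = f (s * a) := comp_mul_eq_comp_mul_of_symm hsymm hs
  · have hca : s * a < c * a := mul_lt_mul_of_pos_right hgt ha
    calc min (f (c * a)) (f (c * b)) ≤ f (c * a) := min_le_left _ _
      _ < f (s * a) := hanti hsa (hsa.trans hca.le) hca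

theorem isGreatest_min_comp_mul (hmono : StrictMonoOn f (Iic 1))
    (hanti : StrictAntiOn f (Ici 1)) (hsymm : ∀ t, f (2 - t) = f t) (ha : 0 < a) (hb : 0 < b)
    (hs : s * (a + b) = 2) :
    IsGreatest {v | ∃ c, 0 < c ∧ v = min (f (c * a)) (f (c * b))} (f (s * a)) ∧
      ∀ c, min (f (c * a)) (f (c * b)) = f (s * a) → c = s := by
  have hs_pos : 0 < s := pos_of_mul_pos_left (hs ▸ two_pos) (by positivity)
  refine ⟨⟨⟨s, hs_pos, ?_⟩, ?_⟩, fun c hc => ?_⟩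
  · rw [comp_mul_eq_comp_mul_of_symm hsymm hs, min_self]
  · rintro v ⟨c, -, rfl⟩
    by_cases hcs : c = s
    · rw [hcs, comp_mul_eq_comp_mul_of_symm hsymm hs, min_self]
    · exact (min_comp_mul_lt_of_ne hmono hanti hsymm ha hb hs hcs).le
  · by_contra hcs
    exact (min_comp_mul_lt_of_ne hmono hanti hsymm ha hb hs hcs).ne hc

end SymmetricUnimodal

theorem minimax_value_general
    (δ : ℝ)
    (f : ℝ → ℝ) (hf : ∀ ρ, f ρ = 2 * ρ - ρ ^ 2) :
    IsGreatest
      {v : ℝ | ∃ c : ℝ, 0 < c ∧ v = min (f (c * Real.exp δ)) (f (c * Real.exp (-δ)))}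
      (1 / (Real.cosh δ) ^ 2) ∧
    (∀ c : ℝ, 0 < c →
      min (f (c * Real.exp δ)) (f (c * Real.exp (-δ))) = 1 / (Real.cosh δ) ^ 2 →
      c = 1 / Real.cosh δ) := by
  obtain rfl : f = fun ρ => 2 * ρ - ρ ^ 2 := funext hf
  have hscale : 1 / Real.cosh δ * (Real.exp δ + Real.exp (-δ)) = 2 := by
    rw [Real.cosh_eq]
    field_simp
  obtain ⟨hgreatest, hunique⟩ :=
    isGreatest_min_comp_mul strictMonoOn_two_mul_sub_sq strictAntiOn_two_mul_sub_sq
      two_mul_sub_sq_two_sub (Real.exp_pos δ) (Real.exp_pos (-δ)) hscale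
  rw [two_mul_sub_sq_exp_div_cosh] at hgreatest hunique
  exact ⟨hgreatest, fun c _ => hunique c⟩

theorem minimax_value
    (δ : ℝ) (hδ : 0 < δ)
    (f : ℝ → ℝ) (hf : ∀ ρ, f ρ = 2 * ρ - ρ ^ 2) :
    IsGreatest
      {v : ℝ | ∃ c : ℝ, 0 < c ∧ v = min (f (c * Real.exp δ)) (f (c * Real.exp (-δ)))}
      (1 / (Real.cosh δ) ^ 2) ∧
    (∀ c : ℝ, 0 < c →
      min (f (c * Real.exp δ)) (f (c * Real.exp (-δ))) = 1 / (Real.cosh δ) ^ 2 →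
      c = 1 / Real.cosh δ) :=
  minimax_value_general δ f hf
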